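/- Let K = ℚ(√D) be a real quadratic field and let α ∈ O_K be a totally positive algebraic integer with conjugate α′. If α is indecomposable (not a sum of two totally positive integers of O_K) and b is a nonzero rational integer with b² < 4·N(α) (where N(α) = αα′), then the binary form Q(x,y) = αx² + bxy + α′y² is totally positive definite and additively indecomposable as an integral (non-classical) form over O_K. -/

import Mathlib

open NumberField

/-- `a x² + b xy + c y²` over `K` is totally positive semi-definite. -/
def TPSDK (K : Type*) [Field K] (a b c : K) : Prop :=
  ∀ σ : K →+* ℝ, ∀ u v : ℝ, 0 ≤ σ a * u ^ 2 + σ b * (u * v) + σ c * v ^ 2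

/-- `a x² + b xy + c y²` over `K` is totally positive definite. -/
def TPDK (K : Type*) [Field K] (a b c : K) : Prop :=
  ∀ σ : K →+* ℝ, ∀ u v : ℝ, (u ≠ 0 ∨ v ≠ 0) →
    0 < σ a * u ^ 2 + σ b * (u * v) + σ c * v ^ 2

/-!
Positive definiteness is the discriminant condition at each real place, the place `σ ∘ τ`
supplying the positivity of `α′`. For indecomposability, the outer coefficients of the two
summands are totally nonnegative and add up to `α` and to `α′`; both are indecomposable
(`α′` because `τ` is an automorphism of `K`), so one `a`-coefficient and one `c`-coefficient
vanish. A semi-definite form with a vanishing outer coefficient has vanishing middle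
coefficient, so either one summand is zero or `b = 0`.
-/

namespace NumberField

variable {K : Type*} [Field K]

def IsIndecomposable (α : 𝓞 K) : Prop :=
  ¬ ∃ β γ : 𝓞 K, (∀ σ : K →+* ℝ, 0 < σ (β : K)) ∧
    (∀ σ : K →+* ℝ, 0 < σ (γ : K)) ∧ β + γ = α

namespace IsIndecomposable

variable {α : 𝓞 K}

/-- Without real embeddings total positivity is vacuous, and `α = α + 0` is a decomposition. -/
theorem nonempty_ringHom_real (h : IsIndecomposable α) : Nonempty (K →+* ℝ) := by
  by_contra hK
  rw [not_nonempty_iff] at hK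
  exact h ⟨α, 0, isEmptyElim, isEmptyElim, add_zero α⟩

theorem eq_zero_or_eq_zero_of_add_eq (h : IsIndecomposable α) {x y : 𝓞 K}
    (hx : ∀ σ : K →+* ℝ, 0 ≤ σ (x : K)) (hy : ∀ σ : K →+* ℝ, 0 ≤ σ (y : K))
    (hxy : x + y = α) : x = 0 ∨ y = 0 := by
  have pos_of_ne_zero {z : 𝓞 K} (hz : ∀ σ : K →+* ℝ, 0 ≤ σ (z : K)) (hz0 : z ≠ 0)
      (σ : K →+* ℝ) : 0 < σ (z : K) :=
    (hz σ).lt_of_ne' (by simpa using hz0)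
  by_contra! hne
  exact h ⟨x, y, pos_of_ne_zero hx hne.1, pos_of_ne_zero hy hne.2, hxy⟩

theorem map (h : IsIndecomposable α) (e : K ≃+* K) :
    IsIndecomposable (RingOfIntegers.mapRingEquiv e α) := by
  rintro ⟨β, γ, hβ, hγ, hsum⟩
  refine h ⟨(RingOfIntegers.mapRingEquiv e).symm β, (RingOfIntegers.mapRingEquiv e).symm γ,
    fun σ => hβ (σ.comp e.symm.toRingHom), fun σ => hγ (σ.comp e.symm.toRingHom), ?_⟩
  rw [← map_add, hsum, RingEquiv.symm_apply_apply]

end IsIndecomposable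

end NumberField

theorem RingHom.bijective_of_numberField {K : Type*} [Field K] [NumberField K] (τ : K →+* K) :
    Function.Bijective τ :=
  Algebra.IsAlgebraic.algHom_bijective τ.toRatAlgHom

theorem eq_zero_of_forall_mul_add_nonneg {b c : ℝ} (h : ∀ t, 0 ≤ b * t + c) : b = 0 := by
  by_contra hb
  have := h (-(c + 1) / b)
  rw [mul_div_cancel₀ _ hb] at this
  linarith

/-- `4a(au² + buv + cv²) = (2au + bv)² + (4ac - b²)v²`. -/
theorem quadratic_form_pos {a b c : ℝ} (ha : 0 < a) (hdisc : b ^ 2 < 4 * a * c) {u v : ℝ}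
    (huv : u ≠ 0 ∨ v ≠ 0) : 0 < a * u ^ 2 + b * (u * v) + c * v ^ 2 := by
  rcases eq_or_ne v 0 with rfl | hv
  · have hu : 0 < u ^ 2 := by simpa [sq_pos_iff] using huv
    nlinarith
  · have hv : 0 < v ^ 2 := by positivity
    nlinarith [sq_nonneg (2 * a * u + b * v), mul_pos ha hv]

section Forms

variable {K : Type*} [Field K] {a b c : K}

theorem TPDK.of_pos_of_sq_lt (ha : ∀ σ : K →+* ℝ, 0 < σ a)
    (hdisc : ∀ σ : K →+* ℝ, σ b ^ 2 < 4 * σ a * σ c) : TPDK K a b c :=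
  fun σ _ _ huv => quadratic_form_pos (ha σ) (hdisc σ) huv

namespace TPSDK

theorem swap (h : TPSDK K a b c) : TPSDK K c b a := fun σ u v => by
  linarith [h σ v u, mul_comm u v]

theorem map_left_nonneg (h : TPSDK K a b c) (σ : K →+* ℝ) : 0 ≤ σ a := by
  simpa using h σ 1 0

theorem map_right_nonneg (h : TPSDK K a b c) (σ : K →+* ℝ) : 0 ≤ σ c :=
  h.swap.map_left_nonneg σ

theorem eq_zero_of_left_eq_zero (h : TPSDK K a b c) (σ : K →+* ℝ) (ha : a = 0) : b = 0 := by
  have hσb : σ b = 0 := eq_zero_of_forall_mul_add_nonneg fun t => by simpa [ha] using h σ t 1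
  simpa using hσb

theorem eq_zero_of_right_eq_zero (h : TPSDK K a b c) (σ : K →+* ℝ) (hc : c = 0) : b = 0 :=
  h.swap.eq_zero_of_left_eq_zero σ hc

end TPSDK

end Forms

theorem not_exists_tpsdk_decomposition {K : Type*} [Field K] {α β γ : 𝓞 K}
    (hα : IsIndecomposable α) (hγ : IsIndecomposable γ) (hβ : β ≠ 0) :
    ¬ ∃ a₁ b₁ c₁ a₂ b₂ c₂ : 𝓞 K,
      TPSDK K a₁ b₁ c₁ ∧ TPSDK K a₂ b₂ c₂ ∧
      ¬(a₁ = 0 ∧ b₁ = 0 ∧ c₁ = 0) ∧ ¬(a₂ = 0 ∧ b₂ = 0 ∧ c₂ = 0) ∧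
      (a₁ : K) + (a₂ : K) = (α : K) ∧ (b₁ : K) + (b₂ : K) = (β : K) ∧
      (c₁ : K) + (c₂ : K) = (γ : K) := by
  rintro ⟨a₁, b₁, c₁, a₂, b₂, c₂, hQ₁, hQ₂, hne₁, hne₂, ha, hb, hc⟩
  obtain ⟨σ⟩ := hα.nonempty_ringHom_real
  have hb_of_a {a b c : 𝓞 K} (hQ : TPSDK K a b c) (ha : a = 0) : b = 0 := by
    exact_mod_cast hQ.eq_zero_of_left_eq_zero σ (by simp [ha])
  have hb_of_c {a b c : 𝓞 K} (hQ : TPSDK K a b c) (hc : c = 0) : b = 0 := by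
    exact_mod_cast hQ.eq_zero_of_right_eq_zero σ (by simp [hc])
  have hb₁₂ : b₁ = 0 → b₂ = 0 → False := fun h₁ h₂ => hβ (by simpa [h₁, h₂] using hb.symm)
  rcases hα.eq_zero_or_eq_zero_of_add_eq hQ₁.map_left_nonneg hQ₂.map_left_nonneg
    (by exact_mod_cast ha) with ha₁ | ha₂ <;>
  rcases hγ.eq_zero_or_eq_zero_of_add_eq hQ₁.map_right_nonneg hQ₂.map_right_nonneg
    (by exact_mod_cast hc) with hc₁ | hc₂
  · exact hne₁ ⟨ha₁, hb_of_a hQ₁ ha₁, hc₁⟩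
  · exact hb₁₂ (hb_of_a hQ₁ ha₁) (hb_of_c hQ₂ hc₂)
  · exact hb₁₂ (hb_of_c hQ₁ hc₁) (hb_of_a hQ₂ ha₂)
  · exact hne₂ ⟨ha₂, hb_of_a hQ₂ ha₂, hc₂⟩

theorem stmt6_general
    (K : Type*) [Field K] [NumberField K]
    (τ : K →+* K)
    (α : 𝓞 K) (hαpos : ∀ σ : K →+* ℝ, 0 < σ (α : K))
    (hαind : ¬ ∃ β γ : 𝓞 K, (∀ σ : K →+* ℝ, 0 < σ (β : K)) ∧
      (∀ σ : K →+* ℝ, 0 < σ (γ : K)) ∧ β + γ = α)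
    (b : ℤ) (hb : b ≠ 0)
    (hbN : ∀ σ : K →+* ℝ, (b : ℝ) ^ 2 < 4 * σ ((α : K) * τ (α : K))) :
    TPDK K (α : K) (b : K) (τ (α : K)) ∧
    ¬ ∃ a₁ b₁ c₁ a₂ b₂ c₂ : 𝓞 K,
      TPSDK K a₁ b₁ c₁ ∧ TPSDK K a₂ b₂ c₂ ∧
      ¬(a₁ = 0 ∧ b₁ = 0 ∧ c₁ = 0) ∧ ¬(a₂ = 0 ∧ b₂ = 0 ∧ c₂ = 0) ∧
      (a₁ : K) + (a₂ : K) = (α : K) ∧ (b₁ : K) + (b₂ : K) = (b : K) ∧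
      (c₁ : K) + (c₂ : K) = τ (α : K) := by
  refine ⟨TPDK.of_pos_of_sq_lt hαpos fun σ => ?_, ?_⟩
  · simpa [mul_assoc] using hbN σ
  · let e : K ≃+* K := RingEquiv.ofBijective τ τ.bijective_of_numberField
    simpa [e] using not_exists_tpsdk_decomposition hαind (IsIndecomposable.map hαind e) (β := b)
      (by exact_mod_cast hb)

/-- Let `K = ℚ(√D)` with conjugation `τ`, and let `α ∈ 𝓞 K` be totally positive
and indecomposable. If `b ∈ ℤ` is nonzero with `b² < 4·N(α)`, then the integral
binary form `Q(x,y) = αx² + bxy + α′y²` is totally positive definite and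
additively indecomposable as an integral (non-classical) form over `𝓞 K`. -/
theorem stmt6 (D : ℤ) (hsf : Squarefree D) (h1 : 1 < D)
    (K : Type*) [Field K] [NumberField K] (r : K) (hr : r ^ 2 = D)
    (hdeg : Module.finrank ℚ K = 2)
    (τ : K →+* K) (hτ : τ r = -r)
    (α : 𝓞 K) (hαpos : ∀ σ : K →+* ℝ, 0 < σ (α : K))
    (hαind : ¬ ∃ β γ : 𝓞 K, (∀ σ : K →+* ℝ, 0 < σ (β : K)) ∧
      (∀ σ : K →+* ℝ, 0 < σ (γ : K)) ∧ β + γ = α)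
    (b : ℤ) (hb : b ≠ 0)
    (hbN : ∀ σ : K →+* ℝ, (b : ℝ) ^ 2 < 4 * σ ((α : K) * τ (α : K))) :
    TPDK K (α : K) (b : K) (τ (α : K)) ∧
    ¬ ∃ a₁ b₁ c₁ a₂ b₂ c₂ : 𝓞 K,
      TPSDK K a₁ b₁ c₁ ∧ TPSDK K a₂ b₂ c₂ ∧
      ¬(a₁ = 0 ∧ b₁ = 0 ∧ c₁ = 0) ∧ ¬(a₂ = 0 ∧ b₂ = 0 ∧ c₂ = 0) ∧
      (a₁ : K) + (a₂ : K) = (α : K) ∧ (b₁ : K) + (b₂ : K) = (b : K) ∧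
      (c₁ : K) + (c₂ : K) = τ (α : K) :=
  stmt6_general K τ α hαpos hαind b hb hbN
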